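/- arXiv:1208.5371 — 3 statements merged into one kernel-verified Lean document; each statement's English description precedes it below -/
import Mathlib

section
/- Let 𝔉 be a union-closed family of subsets of X = {a₁,…,aₙ}, let φ_w be the rising function with respect to w = a₁a₂…aₙ, and let ℱ = φ_w(𝔉). Then the number of join-irreducible elements of 𝔉 satisfies |J(𝔉)| ≤ 2|min(ℱ)| + |min(ℱ \ min(ℱ))|. -/
open Finset

variable {α : Type*} [DecidableEq α]

/-- A family is union-closed if it is closed under pairwise unions. -/
def UnionClosed (F : Finset (Finset α)) : Prop := ∀ f ∈ F, ∀ g ∈ F, f ∪ g ∈ F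

/-- One rising step: φ_{S,a}(z) = z ∪ {a} if z ∪ {a} ∉ S, and z otherwise. -/
def riseStep (S : Finset (Finset α)) (a : α) (z : Finset α) : Finset α :=
  if insert a z ∈ S then z else insert a z

/-- Iterated rising function along a word (list of letters): at each step the
current family is replaced by its image and the next letter is risen. -/
def riseWord (S : Finset (Finset α)) : List α → Finset α → Finset α
  | [], z => z
  | a :: u, z => riseWord (S.image (riseStep S a)) u (riseStep S a z)

/-- The section of a family along (a prefix of) a word. -/
def riseSections (S : Finset (Finset α)) : List α → Finset (Finset α)
  | [] => S
  | a :: u => riseSections (S.image (riseStep S a)) u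

/-- The set of minimal elements of a family (under inclusion). -/
def minsF (F : Finset (Finset α)) : Finset (Finset α) :=
  F.filter fun h => ∀ g ∈ F, g ⊆ h → g = h

/-- The join-irreducible elements of a family. -/
def Jirr (F : Finset (Finset α)) : Finset (Finset α) :=
  F.filter fun g => ∀ h ∈ F, ∀ t ∈ F, h ∪ t = g → h = g ∨ t = g

/- ===================== auxiliary lemmas ===================== -/

lemma rs_eq_of_mem {S : Finset (Finset α)} {a : α} {z : Finset α}
    (h : insert a z ∈ S) : riseStep S a z = z := if_pos h

lemma rs_eq_of_notMem {S : Finset (Finset α)} {a : α} {z : Finset α}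
    (h : insert a z ∉ S) : riseStep S a z = insert a z := if_neg h

lemma subset_rs (S : Finset (Finset α)) (a : α) (z : Finset α) : z ⊆ riseStep S a z := by
  unfold riseStep; split
  · exact Subset.rfl
  · exact subset_insert _ _

lemma rs_subset (S : Finset (Finset α)) (a : α) (z : Finset α) :
    riseStep S a z ⊆ insert a z := by
  unfold riseStep; split
  · exact subset_insert _ _
  · exact Subset.rfl

lemma rs_mem_image {S : Finset (Finset α)} {a : α} {z : Finset α} (hz : z ∈ S) :
    riseStep S a z ∈ S.image (riseStep S a) := mem_image_of_mem _ hz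

lemma mem_image_rs_of_mem_self {S : Finset (Finset α)} {a : α} {y : Finset α}
    (hy : y ∈ S) (ha : a ∈ y) : y ∈ S.image (riseStep S a) := by
  have h : riseStep S a y = y := rs_eq_of_mem (by rwa [insert_eq_self.mpr ha])
  exact h ▸ rs_mem_image hy

lemma insert_mem_image_rs {S : Finset (Finset α)} {a : α} {z : Finset α} (hz : z ∈ S) :
    insert a z ∈ S.image (riseStep S a) := by
  by_cases h : insert a z ∈ S
  · exact mem_image_rs_of_mem_self h (mem_insert_self _ _)
  · exact (rs_eq_of_notMem h) ▸ rs_mem_image hz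

lemma notMem_of_insert_notMem {S : Finset (Finset α)} {a : α} {z : Finset α}
    (hz : z ∈ S) (h : insert a z ∉ S) : a ∉ z :=
  fun c => h (by rwa [insert_eq_self.mpr c])

lemma rs_injOn (S : Finset (Finset α)) (a : α) :
    ∀ z ∈ S, ∀ z' ∈ S, riseStep S a z = riseStep S a z' → z = z' := by
  intro z hz z' hz' h
  by_cases h1 : insert a z ∈ S <;> by_cases h2 : insert a z' ∈ S
  · rwa [rs_eq_of_mem h1, rs_eq_of_mem h2] at h
  · rw [rs_eq_of_mem h1, rs_eq_of_notMem h2] at h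
    exact absurd (h ▸ hz) h2
  · rw [rs_eq_of_notMem h1, rs_eq_of_mem h2] at h
    exact absurd (h ▸ hz') h1
  · rw [rs_eq_of_notMem h1, rs_eq_of_notMem h2] at h
    have ha1 : a ∉ z := notMem_of_insert_notMem hz h1
    have ha2 : a ∉ z' := notMem_of_insert_notMem hz' h2
    calc z = (insert a z).erase a := (erase_insert ha1).symm
      _ = (insert a z').erase a := by rw [h]
      _ = z' := erase_insert ha2

lemma uc_rs {S : Finset (Finset α)} (hS : UnionClosed S) (a : α) :
    UnionClosed (S.image (riseStep S a)) := by
  intro f' hf' g' hg'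
  obtain ⟨f, hf, rfl⟩ := mem_image.1 hf'
  obtain ⟨g, hg, rfl⟩ := mem_image.1 hg'
  by_cases h1 : insert a f ∈ S <;> by_cases h2 : insert a g ∈ S
  · rw [rs_eq_of_mem h1, rs_eq_of_mem h2]
    have hm : insert a (f ∪ g) ∈ S := by
      have := hS _ h1 _ hg; rwa [insert_union] at this
    exact (rs_eq_of_mem hm) ▸ rs_mem_image (hS _ hf _ hg)
  · rw [rs_eq_of_mem h1, rs_eq_of_notMem h2, union_insert]
    exact insert_mem_image_rs (hS _ hf _ hg)
  · rw [rs_eq_of_notMem h1, rs_eq_of_mem h2, insert_union]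
    exact insert_mem_image_rs (hS _ hf _ hg)
  · rw [rs_eq_of_notMem h1, rs_eq_of_notMem h2, ← insert_union_distrib]
    exact insert_mem_image_rs (hS _ hf _ hg)

lemma mem_minsF {F : Finset (Finset α)} {m : Finset α} :
    m ∈ minsF F ↔ m ∈ F ∧ ∀ g ∈ F, g ⊆ m → g = m := mem_filter

lemma mem_Jirr {F : Finset (Finset α)} {g : Finset α} :
    g ∈ Jirr F ↔ g ∈ F ∧ ∀ h ∈ F, ∀ t ∈ F, h ∪ t = g → h = g ∨ t = g := mem_filter

/-- minimal elements stay minimal after one rising step. -/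
lemma rs_mins {S : Finset (Finset α)} (hS : UnionClosed S) (a : α) {m : Finset α}
    (hm : m ∈ minsF S) : riseStep S a m ∈ minsF (S.image (riseStep S a)) := by
  obtain ⟨hmS, hmin⟩ := mem_minsF.1 hm
  refine mem_minsF.2 ⟨rs_mem_image hmS, ?_⟩
  intro y hy hsub
  obtain ⟨t, ht, rfl⟩ := mem_image.1 hy
  by_cases h1 : insert a m ∈ S
  · rw [rs_eq_of_mem h1] at hsub ⊢
    have htm : t ⊆ m := (subset_rs S a t).trans hsub
    rw [hmin t ht htm, rs_eq_of_mem h1]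
  · rw [rs_eq_of_notMem h1] at hsub ⊢
    by_cases hat : a ∈ t
    · exfalso
      have hu : t ∪ m ∈ S := hS t ht m hmS
      have he : t ∪ m = insert a m := by
        apply Subset.antisymm
        · exact union_subset ((subset_rs S a t).trans hsub) (subset_insert _ _)
        · exact insert_subset (mem_union_left _ hat) subset_union_right
      exact h1 (he ▸ hu)
    · have htm : t ⊆ insert a m := (subset_rs S a t).trans hsub
      have htm' : t ⊆ m := fun x hx => by
        rcases mem_insert.1 (htm hx) with h | h
        · exact absurd (h ▸ hx) hat
        · exact h
      rw [hmin t ht htm', rs_eq_of_notMem h1]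

/-- a join-irreducible that actually rises stays join-irreducible. -/
lemma rs_jirr_move {S : Finset (Finset α)} (hS : UnionClosed S) (a : α) {g : Finset α}
    (hg : g ∈ Jirr S) (hins : insert a g ∉ S) :
    insert a g ∈ Jirr (S.image (riseStep S a)) := by
  obtain ⟨hgS, hirr⟩ := mem_Jirr.1 hg
  have hag : a ∉ g := notMem_of_insert_notMem hgS hins
  refine mem_Jirr.2 ⟨insert_mem_image_rs hgS, ?_⟩
  intro h' hh' t' ht' huni
  obtain ⟨h, hh, rfl⟩ := mem_image.1 hh'
  obtain ⟨t, ht, rfl⟩ := mem_image.1 ht'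
  have hgsub : g ⊆ h ∪ t := by
    intro x hx
    have hx' : x ∈ riseStep S a h ∪ riseStep S a t := huni ▸ mem_insert_of_mem hx
    have hxa : x ≠ a := fun c => hag (c ▸ hx)
    rcases mem_union.1 hx' with h' | h'
    · rcases mem_insert.1 (rs_subset S a h h') with c | c
      · exact absurd c hxa
      · exact mem_union_left _ c
    · rcases mem_insert.1 (rs_subset S a t h') with c | c
      · exact absurd c hxa
      · exact mem_union_right _ c
  have hmem : h ∪ t ∈ S := hS _ hh _ ht
  have hne : h ∪ t ≠ insert a g := fun c => hins (c ▸ hmem)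
  have hsubins : h ∪ t ⊆ insert a g := union_subset
    ((subset_rs S a h).trans (huni ▸ subset_union_left))
    ((subset_rs S a t).trans (huni ▸ subset_union_right))
  have haht : a ∉ h ∪ t := by
    intro haht
    exact hne (Subset.antisymm hsubins (insert_subset haht hgsub))
  have hht : h ∪ t = g := by
    apply Subset.antisymm _ hgsub
    intro x hx
    rcases mem_insert.1 (hsubins hx) with c | c
    · exact absurd (c ▸ hx) haht
    · exact c
  rcases hirr h hh t ht hht with c | c
  · left; rw [c, rs_eq_of_notMem hins]
  · right; rw [c, rs_eq_of_notMem hins]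

/-- the broken join-irreducible lemma: if `g` is join-irreducible in `S` but its image
is not join-irreducible in the risen family, then `a ∈ g`, `g.erase a` is minimal in
the risen family, and `g.erase a` is not the image of a minimal element of `S`. -/
lemma rs_broken {S : Finset (Finset α)} (hS : UnionClosed S) (a : α) {g : Finset α}
    (hg : g ∈ Jirr S) (hbrk : riseStep S a g ∉ Jirr (S.image (riseStep S a))) :
    a ∈ g ∧ g.erase a ∈ minsF (S.image (riseStep S a)) ∧
      ∀ m₀ ∈ minsF S, riseStep S a m₀ ≠ g.erase a := by
  obtain ⟨hgS, hirr⟩ := mem_Jirr.1 hg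
  have hins : insert a g ∈ S := by
    by_contra hins
    exact hbrk ((rs_eq_of_notMem hins) ▸ rs_jirr_move hS a hg hins)
  have hrho : riseStep S a g = g := rs_eq_of_mem hins
  rw [hrho] at hbrk
  have hgS' : g ∈ S.image (riseStep S a) := hrho ▸ rs_mem_image hgS
  have hex : ¬ ∀ h ∈ S.image (riseStep S a), ∀ t ∈ S.image (riseStep S a),
      h ∪ t = g → h = g ∨ t = g := fun c => hbrk (mem_Jirr.2 ⟨hgS', c⟩)
  push_neg at hex
  obtain ⟨h', hh', t', ht', huni, hne1, hne2⟩ := hex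
  obtain ⟨h, hh, rfl⟩ := mem_image.1 hh'
  obtain ⟨t, ht, rfl⟩ := mem_image.1 ht'
  have hhg : h ⊆ g := (subset_rs S a h).trans (huni ▸ subset_union_left)
  have htg : t ⊆ g := (subset_rs S a t).trans (huni ▸ subset_union_right)
  have hhtS : h ∪ t ∈ S := hS _ hh _ ht
  have hhtne : h ∪ t ≠ g := by
    intro c
    rcases hirr h hh t ht c with d | d
    · exact hne1 (by rw [d, hrho])
    · exact hne2 (by rw [d, hrho])
  have hgsub : g ⊆ insert a (h ∪ t) := by
    intro x hx
    have hx' : x ∈ riseStep S a h ∪ riseStep S a t := huni ▸ hx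
    rcases mem_union.1 hx' with c | c
    · rcases mem_insert.1 (rs_subset S a h c) with d | d
      · exact d ▸ mem_insert_self _ _
      · exact mem_insert_of_mem (mem_union_left _ d)
    · rcases mem_insert.1 (rs_subset S a t c) with d | d
      · exact d ▸ mem_insert_self _ _
      · exact mem_insert_of_mem (mem_union_right _ d)
  have hag : a ∈ g := by
    by_contra hag
    apply hhtne
    apply Subset.antisymm (union_subset hhg htg)
    intro x hx
    rcases mem_insert.1 (hgsub hx) with c | c
    · exact absurd (c ▸ hx) hag
    · exact c
  have haht : a ∉ h ∪ t := by
    intro haht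
    exact hhtne (Subset.antisymm (union_subset hhg htg)
      (fun x hx => by
        rcases mem_insert.1 (hgsub hx) with c | c
        · exact c ▸ haht
        · exact c))
  have hm : h ∪ t = g.erase a := by
    apply Subset.antisymm
    · intro x hx
      exact mem_erase.2 ⟨fun c => haht (c ▸ hx), union_subset hhg htg hx⟩
    · intro x hx
      obtain ⟨hxa, hxg⟩ := mem_erase.1 hx
      rcases mem_insert.1 (hgsub hxg) with c | c
      · exact absurd c hxa
      · exact c
  have hmS : g.erase a ∈ S := hm ▸ hhtS
  have hinsm : insert a (g.erase a) = g := insert_erase hag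
  have hrhom : riseStep S a (g.erase a) = g.erase a :=
    rs_eq_of_mem (by rw [hinsm]; exact hgS)
  have hmS' : g.erase a ∈ S.image (riseStep S a) := hrhom ▸ rs_mem_image hmS
  have ham : a ∉ g.erase a := notMem_erase _ _
  refine ⟨hag, mem_minsF.2 ⟨hmS', ?_⟩, ?_⟩
  · -- minimality of g.erase a in S'
    intro y hy hysub
    obtain ⟨s, hs, rfl⟩ := mem_image.1 hy
    by_cases hcs : insert a s ∈ S
    · rw [rs_eq_of_mem hcs] at hysub ⊢
      have hsm : s ⊆ g.erase a := hysub
      have hkey : insert a s ∪ g.erase a = g := by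
        rw [insert_union, union_eq_right.2 hsm, hinsm]
      rcases hirr _ hcs _ hmS hkey with c | c
      · -- insert a s = g, so s = g.erase a
        have has : a ∉ s := fun c' => ham (hsm c')
        calc s = (insert a s).erase a := (erase_insert has).symm
          _ = g.erase a := by rw [c]
      · exact absurd hag (c ▸ ham)
    · exfalso
      rw [rs_eq_of_notMem hcs] at hysub
      exact ham (hysub (mem_insert_self _ _))
  · -- g.erase a is not the image of a minimal element
    intro m₀ hm₀ heq
    obtain ⟨hm₀S, hm₀min⟩ := mem_minsF.1 hm₀
    have hm₀eq : m₀ = g.erase a := by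
      by_cases hc : insert a m₀ ∈ S
      · rw [rs_eq_of_mem hc] at heq; exact heq
      · exfalso
        rw [rs_eq_of_notMem hc] at heq
        exact ham (heq ▸ mem_insert_self a m₀)
    -- now g.erase a is minimal in S, so h = t = g.erase a
    subst hm₀eq
    have hhsub : h ⊆ g.erase a := hm ▸ (subset_union_left : h ⊆ h ∪ t)
    have htsub : t ⊆ g.erase a := hm ▸ (subset_union_right : t ⊆ h ∪ t)
    have hhm : h = g.erase a := hm₀min h hh hhsub
    have htm : t = g.erase a := hm₀min t ht htsub
    have : riseStep S a h ∪ riseStep S a t = g.erase a := by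
      rw [hhm, htm, hrhom, union_self]
    rw [huni] at this
    exact ham (this ▸ hag)

/-- Key step inequality: one rising step does not decrease |J| + |min|. -/
lemma step_theta {S : Finset (Finset α)} (hS : UnionClosed S) (a : α) :
    (Jirr S).card + (minsF S).card ≤
      (Jirr (S.image (riseStep S a))).card + (minsF (S.image (riseStep S a))).card := by
  classical
  set S' := S.image (riseStep S a) with hS'
  set G := (Jirr S).filter (fun g => riseStep S a g ∈ Jirr S') with hG
  set B := (Jirr S).filter (fun g => ¬ (riseStep S a g ∈ Jirr S')) with hB
  have hGB : G.card + B.card = (Jirr S).card := card_filter_add_card_filter_not _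
  have hJS : ∀ g ∈ Jirr S, g ∈ S := fun g hg => (mem_Jirr.1 hg).1
  have hGle : G.card ≤ (Jirr S').card := by
    apply card_le_card_of_injOn (riseStep S a)
    · intro g hg; exact (mem_filter.1 hg).2
    · intro g hg g' hg' hee
      exact rs_injOn S a g (hJS g (mem_filter.1 hg).1) g' (hJS g' (mem_filter.1 hg').1) hee
  -- broken elements
  have hBfact : ∀ g ∈ B, a ∈ g ∧ g.erase a ∈ minsF S' ∧
      ∀ m₀ ∈ minsF S, riseStep S a m₀ ≠ g.erase a := by
    intro g hgB
    obtain ⟨hgJ, hbrk⟩ := mem_filter.1 hgB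
    exact rs_broken hS a hgJ hbrk
  have hBle : B.card + (minsF S).card ≤ (minsF S').card := by
    have hBim : B.image (fun g => g.erase a) ⊆ minsF S' := by
      intro y hy
      obtain ⟨g, hg, rfl⟩ := mem_image.1 hy
      exact (hBfact g hg).2.1
    have hMim : (minsF S).image (riseStep S a) ⊆ minsF S' := by
      intro y hy
      obtain ⟨m, hm, rfl⟩ := mem_image.1 hy
      exact rs_mins hS a hm
    have hdisj : Disjoint (B.image (fun g => g.erase a)) ((minsF S).image (riseStep S a)) := by
      rw [disjoint_left]
      intro y hy1 hy2
      obtain ⟨g, hg, rfl⟩ := mem_image.1 hy1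
      obtain ⟨m, hm, hme⟩ := mem_image.1 hy2
      exact (hBfact g hg).2.2 m hm hme
    have hcardB : (B.image (fun g => g.erase a)).card = B.card := by
      apply card_image_of_injOn
      intro g hg g' hg' hee
      have h1 : a ∈ g := (hBfact g hg).1
      have h2 : a ∈ g' := (hBfact g' hg').1
      have hee' : g.erase a = g'.erase a := hee
      calc g = insert a (g.erase a) := (insert_erase h1).symm
        _ = insert a (g'.erase a) := by rw [hee']
        _ = g' := insert_erase h2
    have hcardM : ((minsF S).image (riseStep S a)).card = (minsF S).card := by
      apply card_image_of_injOn
      intro m hm m' hm' hee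
      exact rs_injOn S a m (mem_minsF.1 hm).1 m' (mem_minsF.1 hm').1 hee
    calc B.card + (minsF S).card
        = (B.image (fun g => g.erase a)).card + ((minsF S).image (riseStep S a)).card := by
          rw [hcardB, hcardM]
      _ = (B.image (fun g => g.erase a) ∪ (minsF S).image (riseStep S a)).card :=
          (card_union_of_disjoint hdisj).symm
      _ ≤ (minsF S').card := card_le_card (union_subset hBim hMim)
  omega

/- ===================== words and upsets ===================== -/

lemma image_riseWord_cons (F : Finset (Finset α)) (a : α) (u : List α) :
    F.image (riseWord F (a :: u)) =
      (F.image (riseStep F a)).image (riseWord (F.image (riseStep F a)) u) := by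
  rw [Finset.image_image]
  rfl

lemma main_theta : ∀ (w : List α) (F : Finset (Finset α)), UnionClosed F →
    (Jirr F).card + (minsF F).card ≤
      (Jirr (F.image (riseWord F w))).card + (minsF (F.image (riseWord F w))).card := by
  intro w
  induction w with
  | nil =>
    intro F _
    have : F.image (riseWord F []) = F := by
      rw [show riseWord F [] = fun z => z from rfl, Finset.image_id']
    rw [this]
  | cons a u ih =>
    intro F hF
    rw [image_riseWord_cons]
    exact (step_theta hF a).trans (ih _ (uc_rs hF a))

/-- insert-closedness in direction x -/
def InsClosed (T : Finset (Finset α)) (x : α) : Prop := ∀ z ∈ T, insert x z ∈ T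

lemma insclosed_rs_self (S : Finset (Finset α)) (a : α) :
    InsClosed (S.image (riseStep S a)) a := by
  intro z' hz'
  obtain ⟨z, hz, rfl⟩ := mem_image.1 hz'
  by_cases h : insert a z ∈ S
  · rw [rs_eq_of_mem h]
    exact insert_mem_image_rs hz
  · rw [rs_eq_of_notMem h, insert_idem]
    exact insert_mem_image_rs hz

lemma insclosed_rs_pres {S : Finset (Finset α)} {x : α} (hx : InsClosed S x) (a : α) :
    InsClosed (S.image (riseStep S a)) x := by
  intro z' hz'
  obtain ⟨y, hy, rfl⟩ := mem_image.1 hz'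
  have hq : insert x y ∈ S := hx y hy
  by_cases hb : insert a y ∈ S
  · rw [rs_eq_of_mem hb]
    have : insert a (insert x y) ∈ S := by
      rw [Finset.insert_comm]; exact hx _ hb
    exact (rs_eq_of_mem this) ▸ rs_mem_image hq
  · rw [rs_eq_of_notMem hb, Finset.insert_comm]
    exact insert_mem_image_rs hq

lemma insclosed_riseWord_of {x : α} :
    ∀ (u : List α) (F : Finset (Finset α)), InsClosed F x →
      InsClosed (F.image (riseWord F u)) x := by
  intro u
  induction u with
  | nil =>
    intro F hF
    have : F.image (riseWord F []) = F := by
      rw [show riseWord F [] = fun z => z from rfl, Finset.image_id']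
    rwa [this]
  | cons a v ih =>
    intro F hF
    rw [image_riseWord_cons]
    exact ih _ (insclosed_rs_pres hF a)

lemma insclosed_riseWord_mem {x : α} :
    ∀ (u : List α) (F : Finset (Finset α)), x ∈ u →
      InsClosed (F.image (riseWord F u)) x := by
  intro u
  induction u with
  | nil => intro F hx; simp at hx
  | cons a v ih =>
    intro F hx
    rw [image_riseWord_cons]
    rcases List.mem_cons.1 hx with rfl | hx
    · exact insclosed_riseWord_of v _ (insclosed_rs_self F x)
    · exact ih _ hx

lemma upward_of_insclosed (T : Finset (Finset α)) (h : ∀ x : α, InsClosed T x) :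
    ∀ y ∈ T, ∀ z : Finset α, y ⊆ z → z ∈ T := by
  have key : ∀ n : ℕ, ∀ y ∈ T, ∀ z : Finset α, y ⊆ z → (z \ y).card = n → z ∈ T := by
    intro n
    induction n with
    | zero =>
      intro y hy z hsub hcard
      have hzy : z \ y = ∅ := card_eq_zero.1 hcard
      have : z ⊆ y := sdiff_eq_empty_iff_subset.1 hzy
      rwa [Subset.antisymm this hsub]
    | succ n ih =>
      intro y hy z hsub hcard
      have hne : (z \ y).Nonempty := card_pos.1 (by omega)
      obtain ⟨x, hx⟩ := hne
      have hxz : x ∈ z := (mem_sdiff.1 hx).1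
      have hxy : x ∉ y := (mem_sdiff.1 hx).2
      apply ih (insert x y) (h x y hy) z (insert_subset hxz hsub)
      rw [sdiff_insert, card_erase_of_mem hx]
      omega
  intro y hy z hsub
  exact key (z \ y).card y hy z hsub rfl

/-- For an upward-closed family, join-irreducibles lie in the bottom two levels. -/
lemma upset_jirr_card (T : Finset (Finset α))
    (hup : ∀ y ∈ T, ∀ z : Finset α, y ⊆ z → z ∈ T) :
    (Jirr T).card ≤ (minsF T).card + (minsF (T \ minsF T)).card := by
  have hsub : Jirr T ⊆ minsF T ∪ minsF (T \ minsF T) := by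
    intro g hgJ
    obtain ⟨hgT, hirr⟩ := mem_Jirr.1 hgJ
    by_cases hmin : g ∈ minsF T
    · exact mem_union_left _ hmin
    · refine mem_union_right _ (mem_minsF.2 ⟨mem_sdiff.2 ⟨hgT, hmin⟩, ?_⟩)
      intro y hy hysub
      by_contra hne
      obtain ⟨hyT, hynmin⟩ := mem_sdiff.1 hy
      have hex : ¬ ∀ z ∈ T, z ⊆ y → z = y := fun c => hynmin (mem_minsF.2 ⟨hyT, c⟩)
      push_neg at hex
      obtain ⟨z, hzT, hzy, hzne⟩ := hex
      obtain ⟨x₁, hx₁y, hx₁z⟩ := exists_of_ssubset (Finset.ssubset_iff_subset_ne.2 ⟨hzy, hzne⟩)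
      obtain ⟨x₂, hx₂g, hx₂y⟩ := exists_of_ssubset (Finset.ssubset_iff_subset_ne.2 ⟨hysub, hne⟩)
      have hx₁g : x₁ ∈ g := hysub hx₁y
      have hx12 : x₁ ≠ x₂ := fun c => hx₂y (c ▸ hx₁y)
      have h₁T : g.erase x₂ ∈ T := hup y hyT _ (subset_erase.2 ⟨hysub, hx₂y⟩)
      have h₂T : g.erase x₁ ∈ T := hup z hzT _ (subset_erase.2 ⟨hzy.trans hysub, hx₁z⟩)
      have huni : g.erase x₁ ∪ g.erase x₂ = g := by
        apply Subset.antisymm (union_subset (erase_subset _ _) (erase_subset _ _))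
        intro x hx
        by_cases hc : x = x₁
        · exact mem_union_right _ (mem_erase.2 ⟨hc ▸ hx12, hx⟩)
        · exact mem_union_left _ (mem_erase.2 ⟨hc, hx⟩)
      rcases hirr _ h₂T _ h₁T huni with c | c
      · exact (erase_ne_self.2 hx₁g) c
      · exact (erase_ne_self.2 hx₂g) c
  exact (card_le_card hsub).trans (card_union_le _ _)

/-- Theorem 6.5: |J(𝔉)| ≤ 2|min(ℱ)| + |min(ℱ \ min(ℱ))| where ℱ = φ_w(𝔉). -/
theorem stmt_17 {α : Type*} [DecidableEq α] [Fintype α]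
    (F : Finset (Finset α)) (hF : UnionClosed F)
    (w : List α) (hnd : w.Nodup) (hall : ∀ x : α, x ∈ w) :
    (Jirr F).card ≤
      2 * (minsF (F.image (riseWord F w))).card +
        (minsF (F.image (riseWord F w) \ minsF (F.image (riseWord F w)))).card := by
  have hup : ∀ y ∈ F.image (riseWord F w), ∀ z : Finset α, y ⊆ z → z ∈ F.image (riseWord F w) :=
    upward_of_insclosed _ (fun x => insclosed_riseWord_mem w F (hall x))
  have h1 := main_theta w F hF
  have h2 := upset_jirr_card (F.image (riseWord F w)) hup
  omega
end

section
/- Let 𝔉 be a union-closed family of subsets of a set X with |X| = n. Then the number of join-irreducible elements of 𝔉 satisfies |J(𝔉)| ≤ 2·C(n, ⌊n/2⌋) + C(n, ⌊n/2⌋ + 1). In particular, any family S ⊆ 2^X with |S| > 2·C(n, ⌊n/2⌋) + C(n, ⌊n/2⌋ + 1) is not union-independent. -/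
/-!
The join-irreducible elements of a union-closed family form a union-independent family: a
join-irreducible `z` that is the union of finitely many members of `𝔉` must be one of them.

For a union-independent `S`, grade `S` by coheight (the length of a longest chain of members of
`S` above an element). Each nonempty `v ∈ S` has a point lying in no member of `S` below `v`,
otherwise `v` would be the union of those members. Collecting these points along a longest
chain above `z` yields a set `Q z` of size `coheightIn S z`, disjoint from `z`, such that no other
`z'` of the same coheight satisfies `z' ⊆ z ∪ Q z`. Hence the pairs `(z, (z ∪ Q z)ᶜ)` with `z` of
coheight `t` satisfy the hypotheses of Bollobás's set-pairs inequality with `|A| + |B| = n - t`,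
and that layer has at most `C(n - t, ⌊(n - t)/2⌋)` elements. Summing over `t`,
`|S| ≤ ∑_{j ≤ n} C(j, ⌊j/2⌋) ≤ 2 C(n, ⌊n/2⌋) + C(n, ⌊n/2⌋ + 1)`.
-/

open Finset

variable {α : Type*} [DecidableEq α]

/-- A family S is union-independent if no element z ∈ S is a union of
elements of S \ {z}. -/
def UnionIndep (S : Finset (Finset α)) : Prop :=
  ∀ z ∈ S, ∀ T ⊆ S.erase z, T.Nonempty → T.sup id ≠ z

theorem UnionClosed.sup_mem {F : Finset (Finset α)} (hF : UnionClosed F) {T : Finset (Finset α)}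
    (hT : T.Nonempty) (hTF : T ⊆ F) : T.sup id ∈ F := by
  induction hT using Nonempty.cons_induction with
  | singleton a => simpa using hTF
  | cons a _ _ _ ih =>
    rw [cons_subset] at hTF
    rw [sup_cons]
    exact hF _ hTF.1 _ (ih hTF.2)

theorem UnionClosed.mem_of_sup_eq_of_mem_Jirr {F : Finset (Finset α)} (hF : UnionClosed F)
    {T : Finset (Finset α)} (hT : T.Nonempty) (hTF : T ⊆ F) {z : Finset α} (hz : z ∈ Jirr F)
    (hsup : T.sup id = z) : z ∈ T := by
  induction hT using Nonempty.cons_induction with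
  | singleton a => simpa using hsup.symm
  | cons a _ _ hT ih =>
    rw [cons_subset] at hTF
    rw [sup_cons] at hsup
    rcases (mem_filter.mp hz).2 a hTF.1 _ (hF.sup_mem hT hTF.2) hsup with rfl | hTz
    · exact mem_cons_self _ _
    · exact mem_cons.mpr (Or.inr (ih hTF.2 hTz))

theorem UnionClosed.unionIndep_Jirr {F : Finset (Finset α)} (hF : UnionClosed F) :
    UnionIndep (Jirr F) := fun z hz _ hT hne hsup =>
  notMem_erase z _ <| hT <| hF.mem_of_sup_eq_of_mem_Jirr hne
    (hT.trans ((erase_subset _ _).trans (filter_subset _ _))) hz hsup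

section SetPairs

variable {ι : Type*}

theorem sum_sdiff_inv_choose_card_erase {A B X : Finset α} (hB : B.Nonempty) (hAB : Disjoint A B)
    (hX : A ∪ B ⊆ X) :
    ∑ x ∈ X \ A, (((#A + #(B.erase x)).choose #A : ℕ) : ℚ)⁻¹ =
      #X * (((#A + #B).choose #A : ℕ) : ℚ)⁻¹ := by
  obtain ⟨b, hb⟩ : ∃ b, #B = b + 1 := Nat.exists_eq_add_one.mpr hB.card_pos
  have hsplit : ∀ x ∈ X \ A, (((#A + #(B.erase x)).choose #A : ℕ) : ℚ)⁻¹ =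
      if x ∈ B then (((#A + b).choose #A : ℕ) : ℚ)⁻¹
      else (((#A + #B).choose #A : ℕ) : ℚ)⁻¹ := by
    intro x _
    split_ifs with hx
    · rw [card_erase_of_mem hx, hb, Nat.add_sub_cancel]
    · rw [erase_eq_of_notMem hx]
  have hin : (X \ A).filter (· ∈ B) = B := by
    ext x
    simp only [mem_filter, mem_sdiff]
    exact ⟨fun h => h.2, fun h => ⟨⟨hX (mem_union_right _ h), disjoint_right.mp hAB h⟩, h⟩⟩
  have hout : (X \ A).filter (· ∉ B) = X \ (A ∪ B) := by
    ext x
    simp only [mem_filter, mem_sdiff, mem_union, not_or, and_assoc]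
  have hcard : #(X \ (A ∪ B)) + #A + #B = #X := by
    rw [card_sdiff_of_subset hX, card_union_of_disjoint hAB]
    have := card_le_card hX
    rw [card_union_of_disjoint hAB] at this
    omega
  -- The `b + 1` terms with `x ∈ B` weigh as much as `#A + #B` terms `C(#A + #B, #A)⁻¹`.
  have hpascal : (((#A + b).choose #A : ℕ) : ℚ) * (#A + b + 1) =
      ((#A + b + 1).choose #A : ℕ) * (b + 1) := by
    have := Nat.choose_mul_succ_eq (#A + b) #A
    rw [show #A + b + 1 - #A = b + 1 by omega] at this
    exact_mod_cast this
  have hpos : (((#A + b).choose #A : ℕ) : ℚ) ≠ 0 := by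
    exact_mod_cast (Nat.choose_pos (by omega)).ne'
  have hpos' : (((#A + b + 1).choose #A : ℕ) : ℚ) ≠ 0 := by
    exact_mod_cast (Nat.choose_pos (by omega)).ne'
  rw [sum_congr rfl hsplit, sum_ite, sum_const, sum_const, hin, hout, nsmul_eq_mul,
    nsmul_eq_mul, ← hcard, hb]
  rw [show #A + (b + 1) = #A + b + 1 by ring]
  field_simp
  push_cast
  linear_combination -hpascal

structure IsSetPairSystem (X : Finset α) (I : Finset ι) (A B : ι → Finset α) : Prop where
  union_subset : ∀ i ∈ I, A i ∪ B i ⊆ X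
  disjoint : ∀ i ∈ I, Disjoint (A i) (B i)
  not_disjoint : ∀ i ∈ I, ∀ j ∈ I, i ≠ j → ¬Disjoint (A i) (B j)

theorem IsSetPairSystem.erase {X : Finset α} {I : Finset ι} {A B : ι → Finset α}
    (h : IsSetPairSystem X I A B) (x : α) :
    IsSetPairSystem (X.erase x) (I.filter (x ∉ A ·)) A fun i => (B i).erase x where
  union_subset i hi y hy := by
    obtain ⟨hi, hxA⟩ := mem_filter.mp hi
    refine mem_erase.mpr ⟨?_, h.union_subset i hi (union_subset_union_right (erase_subset _ _) hy)⟩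
    rintro rfl
    rcases mem_union.mp hy with hyA | hyB
    · exact hxA hyA
    · exact notMem_erase _ _ hyB
  disjoint i hi := (h.disjoint i (mem_filter.mp hi).1).mono_right (erase_subset _ _)
  not_disjoint i hi j hj hij := by
    obtain ⟨y, hyA, hyB⟩ :=
      not_disjoint_iff.mp (h.not_disjoint i (mem_filter.mp hi).1 j (mem_filter.mp hj).1 hij)
    refine not_disjoint_iff.mpr ⟨y, hyA, mem_erase.mpr ⟨?_, hyB⟩⟩
    rintro rfl
    exact (mem_filter.mp hi).2 hyA

-- Induction on `X`: averaging over `x ∈ X` the inequalities for the systems `h.erase x`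
-- gives back `#X` times this one, by `sum_sdiff_inv_choose_card_erase`.
theorem IsSetPairSystem.sum_inv_choose_le_one {X : Finset α} {I : Finset ι} {A B : ι → Finset α}
    (h : IsSetPairSystem X I A B) :
    ∑ i ∈ I, (((#(A i) + #(B i)).choose #(A i) : ℕ) : ℚ)⁻¹ ≤ 1 := by
  induction X using Finset.strongInduction generalizing I B with
  | H X ih =>
  by_cases hI : #I ≤ 1
  · calc ∑ i ∈ I, (((#(A i) + #(B i)).choose #(A i) : ℕ) : ℚ)⁻¹ ≤ #I • (1 : ℚ) :=
          sum_le_card_nsmul _ _ _ fun i _ => inv_le_one_of_one_le₀ (by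
            exact_mod_cast Nat.choose_pos (Nat.le_add_right _ _))
      _ ≤ 1 := by rw [nsmul_one]; exact_mod_cast hI
  have hB : ∀ i ∈ I, (B i).Nonempty := by
    intro i hi
    obtain ⟨j, hj, hji⟩ := exists_mem_ne (not_le.mp hI) i
    obtain ⟨x, -, hx⟩ := not_disjoint_iff.mp (h.not_disjoint j hj i hi hji)
    exact ⟨x, hx⟩
  have hXpos : (0 : ℚ) < #X := by
    obtain ⟨i, hi⟩ := card_pos.mp (by omega : 0 < #I)
    obtain ⟨x, hx⟩ := hB i hi
    exact_mod_cast card_pos.mpr ⟨x, h.union_subset i hi (mem_union_right _ hx)⟩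
  refine le_of_mul_le_mul_left ?_ hXpos
  calc (#X : ℚ) * ∑ i ∈ I, (((#(A i) + #(B i)).choose #(A i) : ℕ) : ℚ)⁻¹
      = ∑ i ∈ I, ∑ x ∈ X \ A i, (((#(A i) + #((B i).erase x)).choose #(A i) : ℕ) : ℚ)⁻¹ := by
        rw [mul_sum]
        exact sum_congr rfl fun i hi => (sum_sdiff_inv_choose_card_erase (hB i hi)
          (h.disjoint i hi) (h.union_subset i hi)).symm
    _ = ∑ x ∈ X, ∑ i ∈ I.filter (x ∉ A ·),
          (((#(A i) + #((B i).erase x)).choose #(A i) : ℕ) : ℚ)⁻¹ :=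
        sum_comm' fun i x => by simp only [mem_sdiff, mem_filter]; tauto
    _ ≤ ∑ _x ∈ X, (1 : ℚ) := sum_le_sum fun x hx => ih _ (erase_ssubset hx) (h.erase x)
    _ = #X * 1 := by rw [sum_const, nsmul_eq_mul]

theorem IsSetPairSystem.card_le_choose_half {X : Finset α} {I : Finset ι} {A B : ι → Finset α}
    {m : ℕ} (h : IsSetPairSystem X I A B) (hm : ∀ i ∈ I, #(A i) + #(B i) = m) :
    #I ≤ m.choose (m / 2) := by
  have hpos : (0 : ℚ) < m.choose (m / 2) := by exact_mod_cast Nat.choose_pos (Nat.div_le_self m 2)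
  have hterm : ∀ i ∈ I, ((m.choose (m / 2) : ℕ) : ℚ)⁻¹ ≤
      (((#(A i) + #(B i)).choose #(A i) : ℕ) : ℚ)⁻¹ := by
    intro i hi
    rw [hm i hi]
    exact inv_anti₀ (by exact_mod_cast Nat.choose_pos (hm i hi ▸ Nat.le_add_right _ _))
      (by exact_mod_cast Nat.choose_le_middle _ _)
  have := (card_nsmul_le_sum I _ _ hterm).trans h.sum_inv_choose_le_one
  rw [nsmul_eq_mul, ← div_eq_mul_inv, div_le_one hpos] at this
  exact_mod_cast this

end SetPairs

theorem UnionIndep.exists_mem_notMem_of_ssubset {S : Finset (Finset α)} (hS : UnionIndep S)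
    {v : Finset α} (hv : v ∈ S) (hne : v.Nonempty) : ∃ x ∈ v, ∀ y ∈ S, y ⊂ v → x ∉ y := by
  set T := S.filter (· ⊂ v)
  have hTv : T.sup id ⊆ v := Finset.sup_le fun y hy => (mem_filter.mp hy).2.subset
  have hTne : T.sup id ≠ v := by
    by_cases hT : T.Nonempty
    · refine hS v hv T (fun y hy => ?_) hT
      exact mem_erase.mpr ⟨(mem_filter.mp hy).2.ne, (mem_filter.mp hy).1⟩
    · rw [not_nonempty_iff_eq_empty.mp hT, sup_empty]
      exact hne.ne_empty.symm
  obtain ⟨x, hxv, hxT⟩ := not_subset.mp fun h => hTne (hTv.antisymm h)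
  exact ⟨x, hxv, fun y hy hyv hxy => hxT (le_sup (f := id) (mem_filter.mpr ⟨hy, hyv⟩) hxy)⟩

def coheightIn (S : Finset (Finset α)) (z : Finset α) : ℕ :=
  (S.filter (z ⊂ ·)).attach.sup fun y => coheightIn S y.1 + 1
termination_by #(S.filter (z ⊂ ·))
decreasing_by
  obtain ⟨hyS, hzy⟩ := mem_filter.mp y.2
  refine card_lt_card ⟨fun w hw => ?_, fun h => ?_⟩
  · exact mem_filter.mpr ⟨(mem_filter.mp hw).1, hzy.trans (mem_filter.mp hw).2⟩
  · exact (mem_filter.mp (h (mem_filter.mpr ⟨hyS, hzy⟩))).2.ne rfl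

theorem coheightIn_lt_of_ssubset {S : Finset (Finset α)} {y z : Finset α} (hy : y ∈ S)
    (hzy : z ⊂ y) : coheightIn S y < coheightIn S z := by
  rw [coheightIn.eq_def S z]
  exact Nat.lt_of_succ_le <| le_sup (f := fun y : S.filter (z ⊂ ·) => coheightIn S y.1 + 1)
    (mem_attach _ ⟨y, mem_filter.mpr ⟨hy, hzy⟩⟩)

theorem exists_coheightIn_add_one_eq {S : Finset (Finset α)} {z : Finset α} {t : ℕ}
    (h : coheightIn S z = t + 1) : ∃ y ∈ S, z ⊂ y ∧ coheightIn S y = t := by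
  rw [coheightIn.eq_def] at h
  have hne : (S.filter (z ⊂ ·)).attach.Nonempty := by
    by_contra hempty
    simp [not_nonempty_iff_eq_empty.mp hempty] at h
  obtain ⟨y, -, hy⟩ := exists_mem_eq_sup _ hne fun y => coheightIn S y.1 + 1
  exact ⟨y.1, (mem_filter.mp y.2).1, (mem_filter.mp y.2).2, by omega⟩

theorem UnionIndep.exists_disjoint_card_eq_coheightIn {S : Finset (Finset α)} (hS : UnionIndep S)
    {z : Finset α} (hz : z ∈ S) :
    ∃ Q : Finset α, Disjoint Q z ∧ #Q = coheightIn S z ∧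
      ∀ u ∈ S, coheightIn S z ≤ coheightIn S u → u ⊆ z ∪ Q → u ⊆ z := by
  generalize ht : coheightIn S z = t
  induction t generalizing z with
  | zero => exact ⟨∅, disjoint_empty_left _, rfl, fun u _ _ hu => by simpa using hu⟩
  | succ t ih =>
    obtain ⟨y, hy, hzy, hyt⟩ := exists_coheightIn_add_one_eq ht
    obtain ⟨Q, hQy, hQcard, hpeel⟩ := ih hy hyt
    obtain ⟨x, hxy, hx⟩ := hS.exists_mem_notMem_of_ssubset hy
      (nonempty_of_ne_empty (ne_bot_of_gt hzy))
    have hxQ : x ∉ Q := fun hxQ => disjoint_left.mp hQy hxQ hxy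
    refine ⟨insert x Q, disjoint_insert_left.mpr ⟨fun hxz => hx z hz hzy hxz,
      hQy.mono_right hzy.subset⟩, by rw [card_insert_of_notMem hxQ, hQcard], ?_⟩
    intro u hu hut huxQ
    have huy : u ⊆ y := hpeel u hu (by omega) <| huxQ.trans <|
      union_subset (hzy.subset.trans subset_union_left)
        (insert_subset (mem_union_left _ hxy) subset_union_right)
    have hxu : x ∉ u := hx u hu (ssubset_of_subset_of_ne huy (by rintro rfl; omega))
    intro a ha
    rcases mem_union.mp (huxQ ha) with haz | haxQ
    · exact haz
    rcases mem_insert.mp haxQ with rfl | haQ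
    · exact absurd ha hxu
    · exact absurd (huy ha) (disjoint_left.mp hQy haQ)

theorem UnionIndep.card_filter_coheightIn_eq_le [Fintype α] {S : Finset (Finset α)}
    (hS : UnionIndep S) (t : ℕ) :
    #(S.filter (coheightIn S · = t)) ≤
      (Fintype.card α - t).choose ((Fintype.card α - t) / 2) := by
  choose! Q hQz hQcard hpeel using fun z (hz : z ∈ S) => hS.exists_disjoint_card_eq_coheightIn hz
  have hsys : IsSetPairSystem univ (S.filter (coheightIn S · = t)) id fun z => (z ∪ Q z)ᶜ := by
    refine ⟨fun _ _ => subset_univ _, fun z _ => disjoint_compl_right_iff.mpr subset_union_left,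
      fun z hz z' hz' hne hzz' => ?_⟩
    obtain ⟨hzS, hzt⟩ := mem_filter.mp hz
    obtain ⟨hz'S, hz't⟩ := mem_filter.mp hz'
    have hsub : z ⊆ z' := hpeel z' hz'S z hzS (by omega) (disjoint_compl_right_iff.mp hzz')
    have := coheightIn_lt_of_ssubset hz'S (ssubset_of_subset_of_ne hsub hne)
    omega
  refine hsys.card_le_choose_half fun z hz => ?_
  obtain ⟨hzS, rfl⟩ := mem_filter.mp hz
  have hle := card_le_univ (z ∪ Q z)
  rw [card_union_of_disjoint (hQz z hzS).symm, hQcard z hzS] at hle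
  rw [id, card_compl, card_union_of_disjoint (hQz z hzS).symm, hQcard z hzS]
  omega

theorem sum_range_choose_half_le (n : ℕ) :
    ∑ j ∈ range (n + 1), j.choose (j / 2) ≤ 2 * n.choose (n / 2) + n.choose (n / 2 + 1) := by
  induction n with
  | zero => simp
  | succ n ih =>
    rw [sum_range_succ]
    obtain ⟨m, rfl | rfl⟩ := Nat.even_or_odd' n
    · rw [show 2 * m / 2 = m by omega] at ih
      rw [show (2 * m + 1) / 2 = m by omega, Nat.choose_succ_succ' (2 * m) m]
      have := Nat.choose_le_choose m (Nat.le_add_right (2 * m) 1)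
      omega
    · rw [show (2 * m + 1) / 2 = m by omega] at ih
      rw [show (2 * m + 1 + 1) / 2 = m + 1 by omega, Nat.choose_succ_succ' (2 * m + 1) m,
        Nat.choose_succ_succ' (2 * m + 1) (m + 1)]
      have := Nat.choose_symm_half m
      omega

theorem UnionIndep.card_le [Fintype α] {S : Finset (Finset α)} (hS : UnionIndep S) :
    #S ≤ 2 * (Fintype.card α).choose (Fintype.card α / 2) +
      (Fintype.card α).choose (Fintype.card α / 2 + 1) := by
  set n := Fintype.card α
  have hmaps : Set.MapsTo (coheightIn S) S (range (n + 1)) := by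
    intro z hz
    obtain ⟨Q, -, hQ, -⟩ := hS.exists_disjoint_card_eq_coheightIn hz
    exact mem_range.mpr (Nat.lt_succ_of_le (hQ ▸ card_le_univ Q))
  calc #S = ∑ t ∈ range (n + 1), #(S.filter (coheightIn S · = t)) :=
        card_eq_sum_card_fiberwise hmaps
    _ ≤ ∑ t ∈ range (n + 1), (n - t).choose ((n - t) / 2) :=
        sum_le_sum fun t _ => hS.card_filter_coheightIn_eq_le t
    _ = ∑ j ∈ range (n + 1), j.choose (j / 2) := by
        simpa using sum_range_reflect (fun j => j.choose (j / 2)) (n + 1)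
    _ ≤ 2 * n.choose (n / 2) + n.choose (n / 2 + 1) := sum_range_choose_half_le n

/-- Corollary 6.7: |J(𝔉)| ≤ 2·C(n,⌊n/2⌋) + C(n,⌊n/2⌋+1); in particular any
family S ⊆ 2^X with more elements than this bound is not union-independent. -/
theorem stmt_18 {α : Type*} [DecidableEq α] [Fintype α]
    (F : Finset (Finset α)) (hF : UnionClosed F) :
    (Jirr F).card ≤
      2 * (Fintype.card α).choose (Fintype.card α / 2) +
        (Fintype.card α).choose (Fintype.card α / 2 + 1) ∧
    ∀ S : Finset (Finset α),
      2 * (Fintype.card α).choose (Fintype.card α / 2) +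
        (Fintype.card α).choose (Fintype.card α / 2 + 1) < S.card →
      ¬ UnionIndep S :=
  ⟨hF.unionIndep_Jirr.card_le, fun _ hlt hS => hlt.not_ge hS.card_le⟩
end

section
/- Let 𝓐 be an antichain of subsets of a finite set X with |X| = n. Then 2|𝓐| + |∇̄(𝓐)| ≤ 2·C(n, ⌊n/2⌋) + C(n, ⌊n/2⌋ + 1), and this bound is tight (attained, e.g., by the antichain of all ⌊n/2⌋-subsets of X). -/
/-! By the LYM inequality, each of the two disjoint antichains `𝓐` and `∇̄(𝓐)` has total weight
`∑ 1 / C(n, |s|)` at most `1`. A set of the middle layer weighs `1 / C(n, ⌊n/2⌋)` and any other set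
at least `1 / C(n, ⌊n/2⌋ + 1)`, so a family of total weight at most `2` has at most
`C(n, ⌊n/2⌋) + C(n, ⌊n/2⌋ + 1)` members. This bounds `|𝓐| + |∇̄(𝓐)|`, and Sperner's theorem
bounds the remaining `|𝓐|`. The middle layer attains the bound, its first upward level being
the next layer. -/

open Finset

variable {α : Type*} [DecidableEq α]

/-- The shade ∇(𝓐) = { B : ∃ A ∈ 𝓐, A ⊆ B and |B| = |A| + 1 }. -/
def shade [Fintype α] (A : Finset (Finset α)) : Finset (Finset α) :=
  (Finset.univ : Finset (Finset α)).filter fun B => ∃ a ∈ A, a ⊆ B ∧ B.card = a.card + 1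

/-- The first upward level ∇̄(𝓐) = min(∇(𝓐)). -/
def nablaBar [Fintype α] (A : Finset (Finset α)) : Finset (Finset α) :=
  minsF (shade A)

namespace Nat

theorem choose_le_choose_of_le_of_le_half {n a b : ℕ} (hab : a ≤ b) (hb : b ≤ n / 2) :
    n.choose a ≤ n.choose b := by
  induction b, hab using Nat.le_induction with
  | base => rfl
  | succ k hk ih => exact (ih (by omega)).trans (choose_le_succ_of_lt_half_left (by omega))

theorem choose_le_choose_half_add_one {n k : ℕ} (hk : k ≠ n / 2) :
    n.choose k ≤ n.choose (n / 2 + 1) := by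
  rcases lt_or_ge n k with hnk | hkn
  · simp [choose_eq_zero_of_lt hnk]
  have hn : n / 2 + 1 ≤ n := by omega
  rw [← choose_symm hn]
  rcases lt_or_gt_of_ne hk with hlt | hgt
  · exact choose_le_choose_of_le_of_le_half (by omega) (by omega)
  · rw [← choose_symm hkn]
    exact choose_le_choose_of_le_of_le_half (by omega) (by omega)

end Nat

theorem minsF_subset (F : Finset (Finset α)) : minsF F ⊆ F := filter_subset _ _

theorem isAntichain_minsF (F : Finset (Finset α)) :
    IsAntichain (· ⊆ ·) (minsF F : Set (Finset α)) :=
  fun _ hs _ ht hne hst ↦ hne ((mem_filter.1 ht).2 _ (mem_filter.1 hs).1 hst)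

theorem minsF_eq_self {F : Finset (Finset α)} (hF : IsAntichain (· ⊆ ·) (F : Set (Finset α))) :
    minsF F = F :=
  filter_true_of_mem fun _ ht _ hs hst ↦ hF.eq hs ht hst


variable [Fintype α]

open scoped FinsetFamily

omit [DecidableEq α] in
theorem Finset.card_le_of_sum_inv_choose_le_two {F : Finset (Finset α)}
    (hF : ∑ s ∈ F, ((Fintype.card α).choose #s : ℚ)⁻¹ ≤ 2) :
    #F ≤ (Fintype.card α).choose (Fintype.card α / 2) +
      (Fintype.card α).choose (Fintype.card α / 2 + 1) := by
  set n := Fintype.card α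
  set c := n.choose (n / 2)
  set d := n.choose (n / 2 + 1)
  have hc : (0 : ℚ) < c := Nat.cast_pos.2 (Nat.choose_pos (Nat.div_le_self n 2))
  have hdc : (d : ℚ) ≤ c := by exact_mod_cast Nat.choose_le_middle _ _
  have hmid : #(F.filter (#· = n / 2)) ≤ c := by
    simpa [n, c] using card_le_card (s := F.filter (#· = n / 2)) (t := powersetCard (n / 2) univ)
      fun s hs ↦ mem_powersetCard_univ.2 (mem_filter.1 hs).2
  have hterm : ∀ s ∈ F, (1 : ℚ) ≤
      d * ((n.choose #s : ℚ))⁻¹ + (1 - d / c) * if #s = n / 2 then 1 else 0 := by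
    intro s _
    split_ifs with hs
    · rw [hs, mul_one, ← div_eq_mul_inv, add_sub_cancel]
    · have hpos : (0 : ℚ) < n.choose #s := Nat.cast_pos.2 (Nat.choose_pos (card_le_univ s))
      rw [mul_zero, add_zero, ← div_eq_mul_inv, one_le_div hpos]
      exact_mod_cast Nat.choose_le_choose_half_add_one hs
  have hsum := sum_le_sum hterm
  rw [sum_add_distrib, ← mul_sum, ← mul_sum, sum_boole, sum_const, nsmul_one] at hsum
  have : (#F : ℚ) ≤ c + d := by
    calc (#F : ℚ) ≤ d * 2 + (1 - d / c) * c := by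
          refine hsum.trans (add_le_add (by gcongr) (mul_le_mul_of_nonneg_left ?_ ?_))
          · exact_mod_cast hmid
          · rw [sub_nonneg, div_le_one hc]; exact hdc
      _ = c + d := by field_simp; ring
  exact_mod_cast this

theorem shade_eq_upShadow (A : Finset (Finset α)) : shade A = ∂⁺ A := by
  ext t
  simp [shade, mem_upShadow_iff_exists_mem_card_add_one]

theorem Finset.upShadow_powersetCard_univ (k : ℕ) :
    ∂⁺ (powersetCard k (univ : Finset α)) = powersetCard (k + 1) univ := by
  refine Subset.antisymm (fun t ht ↦ ?_) fun t ht ↦ ?_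
  · exact mem_powersetCard_univ.2 (Set.sized_powersetCard _ _ |>.upShadow ht)
  · rw [mem_powersetCard_univ] at ht
    obtain ⟨a, ha⟩ := card_pos.1 (by omega : 0 < #t)
    exact mem_upShadow_iff_erase_mem.2 ⟨a, ha, mem_powersetCard_univ.2 (by simp [ha, ht])⟩

theorem IsAntichain.disjoint_upShadow {A : Finset (Finset α)}
    (hA : IsAntichain (· ⊆ ·) (A : Set (Finset α))) : Disjoint A (∂⁺ A) := by
  refine disjoint_left.2 fun t htA ht ↦ ?_
  obtain ⟨s, hsA, hst, hcard⟩ := mem_upShadow_iff_exists_mem_card_add_one.1 ht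
  rw [hA.eq hsA htA hst] at hcard
  omega

theorem isAntichain_nablaBar (A : Finset (Finset α)) :
    IsAntichain (· ⊆ ·) (nablaBar A : Set (Finset α)) :=
  isAntichain_minsF _

theorem IsAntichain.disjoint_nablaBar {A : Finset (Finset α)}
    (hA : IsAntichain (· ⊆ ·) (A : Set (Finset α))) : Disjoint A (nablaBar A) :=
  hA.disjoint_upShadow.mono_right ((minsF_subset _).trans (shade_eq_upShadow A).le)

theorem nablaBar_powersetCard_univ (k : ℕ) :
    nablaBar (powersetCard k (univ : Finset α)) = powersetCard (k + 1) univ := by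
  rw [nablaBar, shade_eq_upShadow, upShadow_powersetCard_univ,
    minsF_eq_self (Set.sized_powersetCard _ _).isAntichain]

theorem IsAntichain.card_add_card_le {A B : Finset (Finset α)}
    (hA : IsAntichain (· ⊆ ·) (A : Set (Finset α))) (hB : IsAntichain (· ⊆ ·) (B : Set (Finset α)))
    (hAB : Disjoint A B) :
    #A + #B ≤ (Fintype.card α).choose (Fintype.card α / 2) +
      (Fintype.card α).choose (Fintype.card α / 2 + 1) := by
  rw [← card_union_of_disjoint hAB]
  apply Finset.card_le_of_sum_inv_choose_le_two
  rw [sum_union hAB, ← one_add_one_eq_two]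
  exact add_le_add (lubell_yamamoto_meshalkin_inequality_sum_inv_choose hA)
    (lubell_yamamoto_meshalkin_inequality_sum_inv_choose hB)

theorem stmt_19_general {α : Type*} [DecidableEq α] [Fintype α] :
    (∀ A : Finset (Finset α), A.Nonempty →
      (∀ f ∈ A, ∀ g ∈ A, f ⊆ g → f = g) →
      2 * A.card + (nablaBar A).card ≤
        2 * (Fintype.card α).choose (Fintype.card α / 2) +
          (Fintype.card α).choose (Fintype.card α / 2 + 1)) ∧
    ∃ A : Finset (Finset α), A.Nonempty ∧
      (∀ f ∈ A, ∀ g ∈ A, f ⊆ g → f = g) ∧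
      2 * A.card + (nablaBar A).card =
        2 * (Fintype.card α).choose (Fintype.card α / 2) +
          (Fintype.card α).choose (Fintype.card α / 2 + 1) := by
  refine ⟨fun A _ hA ↦ ?_, powersetCard (Fintype.card α / 2) univ, ?_, ?_, ?_⟩
  · have hA' : IsAntichain (· ⊆ ·) (A : Set (Finset α)) := fun s hs t ht hne hst ↦
      hne (hA s hs t ht hst)
    have hsperner := hA'.sperner
    have hpair := hA'.card_add_card_le (isAntichain_nablaBar A) hA'.disjoint_nablaBar
    omega
  · exact powersetCard_nonempty.2 (by simpa using Nat.div_le_self _ 2)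
  · exact fun f hf g hg hfg ↦ (Set.sized_powersetCard _ _).isAntichain.eq hf hg hfg
  · rw [nablaBar_powersetCard_univ, card_powersetCard, card_powersetCard, card_univ]

/-- Theorem 6.9: for every antichain 𝓐 of subsets of X with |X| = n,
2|𝓐| + |∇̄(𝓐)| ≤ 2·C(n,⌊n/2⌋) + C(n,⌊n/2⌋+1), and the bound is tight,
being attained by some antichain (e.g. all ⌊n/2⌋-subsets of X). -/
theorem stmt_19 {α : Type*} [DecidableEq α] [Fintype α] [Nonempty α] :
    (∀ A : Finset (Finset α), A.Nonempty →
      (∀ f ∈ A, ∀ g ∈ A, f ⊆ g → f = g) →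
      2 * A.card + (nablaBar A).card ≤
        2 * (Fintype.card α).choose (Fintype.card α / 2) +
          (Fintype.card α).choose (Fintype.card α / 2 + 1)) ∧
    ∃ A : Finset (Finset α), A.Nonempty ∧
      (∀ f ∈ A, ∀ g ∈ A, f ⊆ g → f = g) ∧
      2 * A.card + (nablaBar A).card =
        2 * (Fintype.card α).choose (Fintype.card α / 2) +
          (Fintype.card α).choose (Fintype.card α / 2 + 1) :=
  stmt_19_general
end
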